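/- arXiv:2511.14551 — 3 statements merged into one kernel-verified Lean document; each statement's English description precedes it below -/
import Mathlib

section
/- Let s ≥ 1 be an integer and let q > 0 and γ > 0 be real numbers. Then ∑_{π ∈ Π[s]} q^{|π|−1} ((|π|−1)!)^{1+γ} ≤ 2^s (1+q)^{s−1} ((s−1)!)^{1+γ}. -/
open Finset

namespace Statement0Aux

variable {s : ℕ}

/-- The blocks of a partition, enumerated by `ℕ` via an equiv `e`. -/
def B (π : Finpartition (univ : Finset (Fin s)))
    (e : Fin π.parts.card ≃ {x // x ∈ π.parts}) (i : ℕ) : Finset (Fin s) :=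
  if h : i < π.parts.card then (e ⟨i, h⟩ : {x // x ∈ π.parts}) else ∅

/-- Partial sums of block sizes. -/
def b (π : Finpartition (univ : Finset (Fin s)))
    (e : Fin π.parts.card ≃ {x // x ∈ π.parts}) (j : ℕ) : ℕ :=
  ∑ i ∈ Finset.range j, (B π e i).card

variable (π : Finpartition (univ : Finset (Fin s)))
  (e : Fin π.parts.card ≃ {x // x ∈ π.parts})

lemma B_mem {i : ℕ} (h : i < π.parts.card) : B π e i ∈ π.parts := by
  rw [B, dif_pos h]; exact (e ⟨i, h⟩).2

lemma B_card_pos {i : ℕ} (h : i < π.parts.card) : 0 < (B π e i).card :=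
  Finset.card_pos.mpr (π.nonempty_of_mem_parts (B_mem π e h))

lemma b_zero : b π e 0 = 0 := Finset.sum_range_zero _

lemma b_succ (j : ℕ) : b π e (j + 1) = b π e j + (B π e j).card :=
  Finset.sum_range_succ _ _

lemma b_mono : Monotone (b π e) := fun _ _ h =>
  Finset.sum_le_sum_of_subset (Finset.range_subset_range.2 h)

lemma b_k : b π e π.parts.card = s := by
  have h1 : b π e π.parts.card = ∑ i : Fin π.parts.card, ((e i : Finset (Fin s))).card := by
    rw [b, ← Fin.sum_univ_eq_sum_range (fun i => (B π e i).card)]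
    refine Finset.sum_congr rfl fun i _ => ?_
    rw [B, dif_pos i.isLt, Fin.eta]
  rw [h1, Equiv.sum_comp e (fun x : {x // x ∈ π.parts} => (x : Finset (Fin s)).card)]
  rw [Finset.univ_eq_attach, Finset.sum_attach π.parts (fun p => p.card),
    π.sum_card_parts, Finset.card_univ, Fintype.card_fin]

lemma b_of_ge {j : ℕ} (h : π.parts.card ≤ j) : b π e j = s := by
  have := Finset.sum_range_add_sum_Ico (fun i => (B π e i).card) h
  have hz : ∑ i ∈ Finset.Ico π.parts.card j, (B π e i).card = 0 := by
    refine Finset.sum_eq_zero fun i hi => ?_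
    have : ¬ i < π.parts.card := by
      have := (Finset.mem_Ico.1 hi).1; omega
    rw [B, dif_neg this, Finset.card_empty]
  rw [b, ← this, hz, add_zero, ← b, b_k]

lemma b_le (j : ℕ) : b π e j ≤ s := by
  calc b π e j ≤ b π e (max j π.parts.card) := b_mono π e (le_max_left _ _)
    _ = s := b_of_ge π e (le_max_right _ _)

lemma b_strict {i j : ℕ} (h1 : i < j) (h2 : j ≤ π.parts.card) : b π e i < b π e j := by
  have hik : i < π.parts.card := lt_of_lt_of_le h1 h2
  calc b π e i < b π e i + (B π e i).card := by
        have := B_card_pos π e hik; omega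
    _ = b π e (i + 1) := (b_succ π e i).symm
    _ ≤ b π e j := b_mono π e h1

/-- The index of the block in which position `p` falls. -/
def idx (p : Fin s) : ℕ :=
  Nat.findGreatest (fun i => b π e i ≤ p.val) (π.parts.card - 1)

lemma k_pos (p : Fin s) : 0 < π.parts.card := by
  refine Finset.card_pos.mpr (π.parts_nonempty ?_)
  have : (univ : Finset (Fin s)).Nonempty := ⟨p, Finset.mem_univ p⟩
  exact this.ne_empty

lemma idx_le (p : Fin s) : idx π e p ≤ π.parts.card - 1 := Nat.findGreatest_le _

lemma idx_lt (p : Fin s) : idx π e p < π.parts.card := by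
  have := idx_le π e p; have := k_pos π p; omega

lemma b_idx_le (p : Fin s) : b π e (idx π e p) ≤ p.val := by
  rw [idx]
  exact Nat.findGreatest_spec (P := fun i => b π e i ≤ p.val) (m := 0) (Nat.zero_le _)
    (by show b π e 0 ≤ p.val; rw [b_zero]; exact Nat.zero_le _)

lemma le_idx {p : Fin s} {m : ℕ} (h1 : m ≤ π.parts.card - 1) (h2 : b π e m ≤ p.val) :
    m ≤ idx π e p := by
  rw [idx]
  exact Nat.le_findGreatest (P := fun i => b π e i ≤ p.val) h1 h2

lemma lt_b_idx_succ (p : Fin s) : p.val < b π e (idx π e p + 1) := by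
  by_contra h
  push_neg at h
  rcases le_or_gt (idx π e p + 1) (π.parts.card - 1) with h1 | h1
  · have := le_idx π e h1 h
    omega
  · have hk := k_pos π p
    have hge : π.parts.card ≤ idx π e p + 1 := by have := idx_le π e p; omega
    rw [b_of_ge π e hge] at h
    exact absurd h (not_le.mpr p.isLt)

lemma idx_unique (p : Fin s) {i : ℕ} (h1 : b π e i ≤ p.val) (h2 : p.val < b π e (i + 1)) :
    idx π e p = i := by
  have hik : i < π.parts.card := by
    by_contra hc
    push_neg at hc
    rw [b_of_ge π e hc] at h1
    exact absurd h1 (not_le.mpr p.isLt)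
  have hle : i ≤ idx π e p := le_idx π e (by omega) h1
  by_contra hne
  have : i + 1 ≤ idx π e p := by omega
  have : b π e (i + 1) ≤ b π e (idx π e p) := b_mono π e this
  have := b_idx_le π e p
  omega

lemma sub_lt (p : Fin s) : p.val - b π e (idx π e p) < (B π e (idx π e p)).card := by
  have h1 := b_idx_le π e p
  have h2 := lt_b_idx_succ π e p
  rw [b_succ] at h2
  omega

/-- The permutation associated to an ordered partition: list out the blocks in order,
each sorted increasingly. -/
def tau (p : Fin s) : Fin s :=
  (B π e (idx π e p)).orderEmbOfFin rfl ⟨p.val - b π e (idx π e p), sub_lt π e p⟩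

lemma tau_mem (p : Fin s) : tau π e p ∈ B π e (idx π e p) :=
  Finset.orderEmbOfFin_mem _ _ _

lemma B_disjoint {i j : ℕ} (hi : i < π.parts.card) (hj : j < π.parts.card) (hij : i ≠ j) :
    Disjoint (B π e i) (B π e j) := by
  refine π.disjoint (B_mem π e hi) (B_mem π e hj) (fun hc => hij ?_)
  have hBi : B π e i = (e ⟨i, hi⟩ : Finset (Fin s)) := by rw [B, dif_pos hi]
  have hBj : B π e j = (e ⟨j, hj⟩ : Finset (Fin s)) := by rw [B, dif_pos hj]
  have hee : e ⟨i, hi⟩ = e ⟨j, hj⟩ := Subtype.ext (by rw [← hBi, ← hBj]; exact hc)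
  have := e.injective hee
  simpa using congrArg Fin.val this

lemma idx_eq_of_mem (p : Fin s) {i : ℕ} (hi : i < π.parts.card)
    (hx : tau π e p ∈ B π e i) : idx π e p = i := by
  by_contra hne
  have hd := B_disjoint π e (idx_lt π e p) hi hne
  exact (Finset.disjoint_left.1 hd) (tau_mem π e p) hx

lemma tau_key (p : Fin s) (i : ℕ) (hi : idx π e p = i)
    (hlt : p.val - b π e i < (B π e i).card) :
    tau π e p = (B π e i).orderEmbOfFin rfl ⟨p.val - b π e i, hlt⟩ := by
  subst hi; rfl

lemma tau_inj : Function.Injective (tau π e) := by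
  intro p p' h
  have hi : idx π e p' = idx π e p :=
    idx_eq_of_mem π e p' (idx_lt π e p) (h ▸ tau_mem π e p)
  have hlt' : p'.val - b π e (idx π e p) < (B π e (idx π e p)).card := by
    have := sub_lt π e p'; rw [hi] at this; exact this
  have hkey : (B π e (idx π e p)).orderEmbOfFin rfl
      ⟨p.val - b π e (idx π e p), sub_lt π e p⟩ =
      (B π e (idx π e p)).orderEmbOfFin rfl
      ⟨p'.val - b π e (idx π e p), hlt'⟩ :=
    (tau_key π e p _ rfl (sub_lt π e p)).symm.trans (h.trans (tau_key π e p' _ hi hlt'))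
  have := (Finset.orderEmbOfFin (B π e (idx π e p)) rfl).injective hkey
  have hv : p.val - b π e (idx π e p) = p'.val - b π e (idx π e p) := by
    injection this
  have h1 := b_idx_le π e p
  have h2 := b_idx_le π e p'
  rw [hi] at h2
  exact Fin.ext (by omega)

/-- The permutation. -/
noncomputable def tauEquiv : Equiv.Perm (Fin s) :=
  Equiv.ofBijective _ (Finite.injective_iff_bijective.mp (tau_inj π e))

lemma tau_surj : Function.Surjective (tau π e) :=
  (Finite.injective_iff_bijective.mp (tau_inj π e)).2

lemma B_eq_image {i : ℕ} (hi : i < π.parts.card) :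
    B π e i = Finset.image (tau π e) (univ.filter fun p => idx π e p = i) := by
  ext x
  constructor
  · intro hx
    obtain ⟨p, rfl⟩ := tau_surj π e x
    have : idx π e p = i := idx_eq_of_mem π e p hi hx
    exact Finset.mem_image.2 ⟨p, by simp [this], rfl⟩
  · intro hx
    obtain ⟨p, hp, rfl⟩ := Finset.mem_image.1 hx
    have : idx π e p = i := (Finset.mem_filter.1 hp).2
    exact this ▸ tau_mem π e p

lemma bpf {j : ℕ} (hj : j < π.parts.card - 1) :
    1 ≤ b π e (j + 1) ∧ b π e (j + 1) - 1 < s - 1 := by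
  have hk2 : 2 ≤ π.parts.card := by omega
  have h1 : 0 < b π e (j + 1) := by
    have : b π e 0 < b π e (j + 1) := b_strict π e (by omega) (by omega)
    rw [b_zero] at this; omega
  have h2 : b π e (j + 1) < s := by
    have := b_strict π e (show j + 1 < π.parts.card by omega) (le_refl _)
    rw [b_k] at this; exact this
  have h3 : 2 ≤ s := by
    have := b_strict π e (show 1 < π.parts.card from hk2) (le_refl _)
    rw [b_k] at this
    have h4 : 0 < b π e 1 := by
      have := b_strict π e (show 0 < 1 by omega) (by omega); rw [b_zero] at this; omega
    omega
  omega

/-- The set of break points. -/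
def A : Finset (Fin (s - 1)) :=
  Finset.image (fun j : Fin (π.parts.card - 1) =>
    (⟨b π e (j.val + 1) - 1, (bpf π e j.isLt).2⟩ : Fin (s - 1))) univ

lemma A_inj : Function.Injective (fun j : Fin (π.parts.card - 1) =>
    (⟨b π e (j.val + 1) - 1, (bpf π e j.isLt).2⟩ : Fin (s - 1))) := by
  intro j j' h
  have hv : b π e (j.val + 1) - 1 = b π e (j'.val + 1) - 1 := by injection h
  have h1 := (bpf π e j.isLt).1
  have h2 := (bpf π e j'.isLt).1
  have hb : b π e (j.val + 1) = b π e (j'.val + 1) := by omega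
  by_contra hne
  rcases lt_or_gt_of_ne (fun hc : j.val = j'.val => hne (Fin.ext hc)) with hlt | hlt
  · have := b_strict π e (show j.val + 1 < j'.val + 1 by omega)
      (show j'.val + 1 ≤ π.parts.card by have := j'.isLt; omega)
    omega
  · have := b_strict π e (show j'.val + 1 < j.val + 1 by omega)
      (show j.val + 1 ≤ π.parts.card by have := j.isLt; omega)
    omega

lemma A_card : (A π e).card = π.parts.card - 1 := by
  rw [A, Finset.card_image_of_injective _ (A_inj π e), Finset.card_univ, Fintype.card_fin]

lemma A_strictMono : StrictMono (fun j : Fin (π.parts.card - 1) =>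
    (⟨b π e (j.val + 1) - 1, (bpf π e j.isLt).2⟩ : Fin (s - 1))) := by
  intro j j' hlt
  have h1 := (bpf π e j.isLt).1
  have := b_strict π e (show j.val + 1 < j'.val + 1 from by exact_mod_cast Nat.succ_lt_succ hlt)
    (show j'.val + 1 ≤ π.parts.card by have := j'.isLt; omega)
  show (b π e (j.val + 1) - 1) < (b π e (j'.val + 1) - 1)
  omega


lemma parts_eq_image : π.parts = (Finset.range π.parts.card).image (B π e) := by
  ext t
  constructor
  · intro ht
    refine Finset.mem_image.2 ⟨(e.symm ⟨t, ht⟩).val,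
      Finset.mem_range.2 (e.symm ⟨t, ht⟩).isLt, ?_⟩
    rw [B, dif_pos (e.symm ⟨t, ht⟩).isLt, Fin.eta, Equiv.apply_symm_apply]
  · intro ht
    obtain ⟨i, hi, rfl⟩ := Finset.mem_image.1 ht
    exact B_mem π e (Finset.mem_range.1 hi)

lemma main_inj (hs : 1 ≤ s) : Function.Injective
    (fun d : (Σ π : Finpartition (univ : Finset (Fin s)),
        Fin π.parts.card ≃ {x // x ∈ π.parts}) =>
      (tauEquiv d.1 d.2, A d.1 d.2)) := by
  rintro ⟨π, e⟩ ⟨π', e'⟩ h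
  have hτ : tauEquiv π e = tauEquiv π' e' := congrArg Prod.fst h
  have hA : A π e = A π' e' := congrArg Prod.snd h
  clear h
  have p0 : Fin s := ⟨0, hs⟩
  have hk : 0 < π.parts.card := k_pos π p0
  have hkk : π'.parts.card = π.parts.card := by
    have h1 := A_card π e
    have h2 := A_card π' e'
    rw [hA] at h1
    have hk' : 0 < π'.parts.card := k_pos π' p0
    omega
  have htau : tau π e = tau π' e' := by
    funext p
    exact congrArg (fun g : Equiv.Perm (Fin s) => g p) hτ
  have hb : ∀ m, b π' e' m = b π e m := by
    intro m
    rcases Nat.eq_zero_or_pos m with rfl | hm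
    · rw [b_zero, b_zero]
    rcases le_or_gt π.parts.card m with hge | hlt
    · rw [b_of_ge π e hge, b_of_ge π' e' (by omega)]
    · have hcard : (A π e).card = π.parts.card - 1 := A_card π e
      set f : Fin (π.parts.card - 1) → Fin (s - 1) := fun j =>
        (⟨b π e (j.val + 1) - 1, (bpf π e j.isLt).2⟩ : Fin (s - 1)) with hfdef
      set f' : Fin (π.parts.card - 1) → Fin (s - 1) := fun j =>
        (⟨b π' e' (j.val + 1) - 1,
          (bpf π' e' (show j.val < π'.parts.card - 1 by have := j.isLt; omega)).2⟩
          : Fin (s - 1)) with hf'def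
      have hf : f = ⇑((A π e).orderEmbOfFin hcard) :=
        Finset.orderEmbOfFin_unique hcard
          (fun j => Finset.mem_image.2 ⟨j, Finset.mem_univ _, rfl⟩)
          (A_strictMono π e)
      have hf' : f' = ⇑((A π e).orderEmbOfFin hcard) := by
        refine Finset.orderEmbOfFin_unique hcard (fun j => ?_) (fun j j' hjj => ?_)
        · rw [hA, A]
          exact Finset.mem_image.2
            ⟨⟨j.val, by have := j.isLt; omega⟩, Finset.mem_univ _, rfl⟩
        · have h1 := (bpf π' e' (show j.val < π'.parts.card - 1 by
            have := j.isLt; omega)).1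
          have := b_strict π' e' (show j.val + 1 < j'.val + 1 by
              exact Nat.succ_lt_succ hjj)
            (show j'.val + 1 ≤ π'.parts.card by have := j'.isLt; omega)
          show (b π' e' (j.val + 1) - 1) < (b π' e' (j'.val + 1) - 1)
          omega
      have hff : f = f' := hf.trans hf'.symm
      have hv := congrArg Fin.val (congrFun hff ⟨m - 1, by omega⟩)
      simp only [hfdef, hf'def] at hv
      have e1 := (bpf π e (show m - 1 < π.parts.card - 1 by omega)).1
      have e2 := (bpf π' e' (show m - 1 < π'.parts.card - 1 by omega)).1
      have hm1 : m - 1 + 1 = m := by omega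
      rw [hm1] at hv e1 e2
      omega
  have hidx : ∀ p, idx π' e' p = idx π e p := fun p =>
    idx_unique π' e' p (by rw [hb]; exact b_idx_le π e p)
      (by rw [hb]; exact lt_b_idx_succ π e p)
  have hB : ∀ i, B π' e' i = B π e i := by
    intro i
    rcases lt_or_ge i π.parts.card with hi | hi
    · have hfil : (univ.filter fun p => idx π' e' p = i)
          = (univ.filter fun p => idx π e p = i) :=
        Finset.filter_congr (fun x _ => by rw [hidx x])
      calc B π' e' i
          = Finset.image (tau π' e') (univ.filter fun p => idx π' e' p = i) :=
            B_eq_image π' e' (by omega)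
        _ = Finset.image (tau π e) (univ.filter fun p => idx π e p = i) := by
            rw [← htau, hfil]
        _ = B π e i := (B_eq_image π e hi).symm
    · rw [B, dif_neg (by omega), B, dif_neg (by omega)]
  have hparts : π'.parts = π.parts := by
    rw [parts_eq_image π e, parts_eq_image π' e', hkk]
    have : B π' e' = B π e := funext hB
    rw [this]
  have hπ : π' = π := Finpartition.ext hparts
  subst hπ
  have he : e = e' := by
    refine Equiv.ext fun i => Subtype.ext ?_
    have h1 : (e i : Finset (Fin s)) = B π' e i.val := by
      rw [B, dif_pos i.isLt, Fin.eta]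
    have h2 : (e' i : Finset (Fin s)) = B π' e' i.val := by
      rw [B, dif_pos i.isLt, Fin.eta]
    rw [h1, h2, hB]
  rw [he]


lemma sum_subsets (q : ℝ) :
    ∑ A : Finset (Fin (s - 1)), q ^ A.card = (1 + q) ^ (s - 1) := by
  calc ∑ A : Finset (Fin (s - 1)), q ^ A.card
      = ∑ A ∈ (univ : Finset (Fin (s - 1))).powerset,
          (∏ _i ∈ A, q) * ∏ _i ∈ (univ : Finset (Fin (s - 1))) \ A, (1 : ℝ) := by
        rw [Finset.powerset_univ]
        exact Finset.sum_congr rfl fun A _ => by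
          rw [Finset.prod_const, Finset.prod_const, one_pow, mul_one]
    _ = ∏ _i ∈ (univ : Finset (Fin (s - 1))), (q + 1) :=
        (Finset.prod_add (fun _ => q) (fun _ => 1) univ).symm
    _ = (1 + q) ^ (s - 1) := by
        rw [Finset.prod_const, Finset.card_univ, Fintype.card_fin, add_comm]

lemma count_le (hs : 1 ≤ s) {q : ℝ} (hq : 0 ≤ q) :
    ∑ π : Finpartition (univ : Finset (Fin s)),
        q ^ (π.parts.card - 1) * (Nat.factorial π.parts.card : ℝ)
      ≤ (Nat.factorial s : ℝ) * (1 + q) ^ (s - 1) := by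
  classical
  set D := (univ : Finset (Finpartition (univ : Finset (Fin s)))).sigma
    (fun π => (univ : Finset (Fin π.parts.card ≃ {x // x ∈ π.parts}))) with hD
  have hcard : ∀ π : Finpartition (univ : Finset (Fin s)),
      (Fintype.card (Fin π.parts.card ≃ {x // x ∈ π.parts}) : ℝ)
        = (Nat.factorial π.parts.card : ℝ) := by
    intro π
    rw [Fintype.card_equiv π.parts.equivFin.symm, Fintype.card_fin]
  have step1 : ∑ d ∈ D, q ^ (d.1.parts.card - 1)
      = ∑ π : Finpartition (univ : Finset (Fin s)),
          q ^ (π.parts.card - 1) * (Nat.factorial π.parts.card : ℝ) := by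
    rw [hD, Finset.sum_sigma]
    refine Finset.sum_congr rfl fun π _ => ?_
    have : ∑ _e : Fin π.parts.card ≃ {x // x ∈ π.parts}, q ^ (π.parts.card - 1)
        = q ^ (π.parts.card - 1) * (Nat.factorial π.parts.card : ℝ) := by
      rw [Finset.sum_const, Finset.card_univ, nsmul_eq_mul, hcard π, mul_comm]
    exact this
  have step2 : ∑ d ∈ D, q ^ (d.1.parts.card - 1)
      = ∑ c ∈ D.image (fun d : (Σ π : Finpartition (univ : Finset (Fin s)),
          Fin π.parts.card ≃ {x // x ∈ π.parts}) => (tauEquiv d.1 d.2, A d.1 d.2)),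
          q ^ c.2.card := by
    rw [Finset.sum_image (fun x _ y _ h => main_inj hs h)]
    exact Finset.sum_congr rfl fun d _ => by rw [A_card]
  have step3 : ∑ c ∈ D.image (fun d : (Σ π : Finpartition (univ : Finset (Fin s)),
          Fin π.parts.card ≃ {x // x ∈ π.parts}) => (tauEquiv d.1 d.2, A d.1 d.2)),
          q ^ c.2.card
      ≤ ∑ c : Equiv.Perm (Fin s) × Finset (Fin (s - 1)), q ^ c.2.card :=
    Finset.sum_le_sum_of_subset_of_nonneg (Finset.subset_univ _)
      (fun c _ _ => pow_nonneg hq _)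
  have step4 : ∑ c : Equiv.Perm (Fin s) × Finset (Fin (s - 1)), q ^ c.2.card
      = (Nat.factorial s : ℝ) * (1 + q) ^ (s - 1) := by
    rw [Fintype.sum_prod_type]
    rw [Finset.sum_congr rfl (fun (τ : Equiv.Perm (Fin s)) _ => sum_subsets q),
      Finset.sum_const, Finset.card_univ, Fintype.card_perm, Fintype.card_fin,
      nsmul_eq_mul]
  rw [← step1, step2]
  rw [step4] at step3
  exact step3

end Statement0Aux

open Statement0Aux in
/-- For every integer `s ≥ 1` and reals `q, γ > 0`,
`∑_{π ∈ Π[s]} q^{|π|−1} ((|π|−1)!)^{1+γ} ≤ 2^s (1+q)^{s−1} ((s−1)!)^{1+γ}`,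
where the sum runs over all set partitions of `{1,…,s}` and `|π|` is the
number of blocks of `π`. -/
theorem statement0 (s : ℕ) (hs : 1 ≤ s) (q γ : ℝ) (hq : 0 < q) (hγ : 0 < γ) :
    ∑ π : Finpartition (Finset.univ : Finset (Fin s)),
        q ^ (π.parts.card - 1) * ((Nat.factorial (π.parts.card - 1) : ℝ)) ^ (1 + γ)
      ≤ 2 ^ s * (1 + q) ^ (s - 1) * ((Nat.factorial (s - 1) : ℝ)) ^ (1 + γ) := by
  classical
  have hF0 : (0:ℝ) < (Nat.factorial (s - 1) : ℝ) := by
    exact_mod_cast Nat.factorial_pos (s - 1)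
  have hFγ : (0:ℝ) ≤ ((Nat.factorial (s - 1) : ℝ)) ^ γ := Real.rpow_nonneg hF0.le _
  have hterm : ∀ π : Finpartition (Finset.univ : Finset (Fin s)),
      q ^ (π.parts.card - 1) * ((Nat.factorial (π.parts.card - 1) : ℝ)) ^ (1 + γ)
      ≤ ((Nat.factorial (s - 1) : ℝ)) ^ γ
          * (q ^ (π.parts.card - 1) * (Nat.factorial π.parts.card : ℝ)) := by
    intro π
    have hks : π.parts.card ≤ s := le_trans π.card_parts_le_card (by simp)
    have hx0 : (0:ℝ) < (Nat.factorial (π.parts.card - 1) : ℝ) := by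
      exact_mod_cast Nat.factorial_pos (π.parts.card - 1)
    have hxF : (Nat.factorial (π.parts.card - 1) : ℝ) ≤ (Nat.factorial (s - 1) : ℝ) := by
      exact_mod_cast Nat.factorial_le (show π.parts.card - 1 ≤ s - 1 by omega)
    have hxk : (Nat.factorial (π.parts.card - 1) : ℝ)
        ≤ (Nat.factorial π.parts.card : ℝ) := by
      exact_mod_cast Nat.factorial_le (show π.parts.card - 1 ≤ π.parts.card by omega)
    have hq0 : (0:ℝ) ≤ q ^ (π.parts.card - 1) := pow_nonneg hq.le _
    calc q ^ (π.parts.card - 1) * ((Nat.factorial (π.parts.card - 1) : ℝ)) ^ (1 + γ)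
        = q ^ (π.parts.card - 1)
            * ((Nat.factorial (π.parts.card - 1) : ℝ)
              * ((Nat.factorial (π.parts.card - 1) : ℝ)) ^ γ) := by
          rw [Real.rpow_add hx0, Real.rpow_one]
      _ ≤ q ^ (π.parts.card - 1)
            * ((Nat.factorial π.parts.card : ℝ)
              * ((Nat.factorial (s - 1) : ℝ)) ^ γ) := by
          refine mul_le_mul_of_nonneg_left ?_ hq0
          exact mul_le_mul hxk (Real.rpow_le_rpow hx0.le hxF hγ.le)
            (Real.rpow_nonneg hx0.le _) (by positivity)
      _ = ((Nat.factorial (s - 1) : ℝ)) ^ γ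
            * (q ^ (π.parts.card - 1) * (Nat.factorial π.parts.card : ℝ)) := by ring
  have hsum : ∑ π : Finpartition (Finset.univ : Finset (Fin s)),
        q ^ (π.parts.card - 1) * ((Nat.factorial (π.parts.card - 1) : ℝ)) ^ (1 + γ)
      ≤ ((Nat.factorial (s - 1) : ℝ)) ^ γ
          * ((Nat.factorial s : ℝ) * (1 + q) ^ (s - 1)) := by
    calc ∑ π : Finpartition (Finset.univ : Finset (Fin s)),
          q ^ (π.parts.card - 1) * ((Nat.factorial (π.parts.card - 1) : ℝ)) ^ (1 + γ)
        ≤ ∑ π : Finpartition (Finset.univ : Finset (Fin s)),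
            ((Nat.factorial (s - 1) : ℝ)) ^ γ
              * (q ^ (π.parts.card - 1) * (Nat.factorial π.parts.card : ℝ)) :=
          Finset.sum_le_sum fun π _ => hterm π
      _ = ((Nat.factorial (s - 1) : ℝ)) ^ γ
            * ∑ π : Finpartition (Finset.univ : Finset (Fin s)),
              q ^ (π.parts.card - 1) * (Nat.factorial π.parts.card : ℝ) := by
          rw [Finset.mul_sum]
      _ ≤ ((Nat.factorial (s - 1) : ℝ)) ^ γ
            * ((Nat.factorial s : ℝ) * (1 + q) ^ (s - 1)) :=
          mul_le_mul_of_nonneg_left (count_le hs hq.le) hFγ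
  refine hsum.trans ?_
  have hfac : (Nat.factorial s : ℝ) ≤ 2 ^ s * (Nat.factorial (s - 1) : ℝ) := by
    have h2 : s * Nat.factorial (s - 1) ≤ 2 ^ s * Nat.factorial (s - 1) :=
      Nat.mul_le_mul_right _ (Nat.lt_two_pow_self (n := s)).le
    rw [← Nat.mul_factorial_pred (by omega : s ≠ 0)]
    exact_mod_cast h2
  have hq1 : (0:ℝ) ≤ (1 + q) ^ (s - 1) := by positivity
  have hFsplit : ((Nat.factorial (s - 1) : ℝ)) ^ (1 + γ)
      = (Nat.factorial (s - 1) : ℝ) * ((Nat.factorial (s - 1) : ℝ)) ^ γ := by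
    rw [Real.rpow_add hF0, Real.rpow_one]
  rw [hFsplit]
  calc ((Nat.factorial (s - 1) : ℝ)) ^ γ * ((Nat.factorial s : ℝ) * (1 + q) ^ (s - 1))
      ≤ ((Nat.factorial (s - 1) : ℝ)) ^ γ
          * ((2 ^ s * (Nat.factorial (s - 1) : ℝ)) * (1 + q) ^ (s - 1)) := by
        refine mul_le_mul_of_nonneg_left ?_ hFγ
        exact mul_le_mul_of_nonneg_right hfac hq1
    _ = 2 ^ s * (1 + q) ^ (s - 1)
          * ((Nat.factorial (s - 1) : ℝ) * ((Nat.factorial (s - 1) : ℝ)) ^ γ) := by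
        ring
end

section
/- Let I be a nonempty finite set, N ≥ 2 an integer, and for each n ∈ {1,…,N} let c^n : I × I → [0,∞) be a nonnegative function. Then, with the cyclic convention i_{N+1} := i_1, ∑_{(i_1,…,i_N)∈I^N} ∏_{n=1}^N c^n(i_n, i_{n+1}) ≤ ∏_{n=1}^N ( ∑_{(i,i')∈I²} c^n(i,i')² )^{1/2}. -/
open Finset

section Aux
open Finset Matrix

variable {I : Type*} [Fintype I] [DecidableEq I]

noncomputable def s4nrm (A : Matrix I I ℝ) : ℝ := Real.sqrt (∑ i : I, ∑ j : I, A i j ^ 2)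

lemma s4nrm_nonneg (A : Matrix I I ℝ) : 0 ≤ s4nrm A := Real.sqrt_nonneg _

lemma s4_trace_mul_le (A B : Matrix I I ℝ) : (A * B).trace ≤ s4nrm A * s4nrm B := by
  have h : (A * B).trace = ∑ p : I × I, A p.1 p.2 * B p.2 p.1 := by
    rw [Matrix.trace, Fintype.sum_prod_type]
    simp [Matrix.mul_apply, Matrix.diag]
  rw [h]
  have := Real.sum_mul_le_sqrt_mul_sqrt (Finset.univ : Finset (I × I))
    (fun p => A p.1 p.2) (fun p => B p.2 p.1)
  have e1 : ∑ p : I × I, A p.1 p.2 ^ 2 = ∑ i : I, ∑ j : I, A i j ^ 2 := by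
    rw [Fintype.sum_prod_type]
  have e2 : ∑ p : I × I, B p.2 p.1 ^ 2 = ∑ i : I, ∑ j : I, B i j ^ 2 := by
    rw [Fintype.sum_prod_type]; exact Finset.sum_comm
  rw [s4nrm, s4nrm, ← e1, ← e2]
  exact this

lemma s4nrm_mul_le (A B : Matrix I I ℝ) : s4nrm (A * B) ≤ s4nrm A * s4nrm B := by
  rw [s4nrm, s4nrm, s4nrm, ← Real.sqrt_mul (by positivity)]
  apply Real.sqrt_le_sqrt
  calc ∑ i : I, ∑ k : I, (A * B) i k ^ 2
      ≤ ∑ i : I, ∑ k : I, (∑ j : I, A i j ^ 2) * (∑ j : I, B j k ^ 2) := by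
        refine Finset.sum_le_sum fun i _ => Finset.sum_le_sum fun k _ => ?_
        rw [Matrix.mul_apply]
        exact Finset.sum_mul_sq_le_sq_mul_sq _ _ _
    _ = ∑ i : I, (∑ j : I, A i j ^ 2) * (∑ k : I, ∑ j : I, B j k ^ 2) := by
        simp_rw [← Finset.mul_sum]
    _ = (∑ i : I, ∑ j : I, A i j ^ 2) * (∑ k : I, ∑ j : I, B j k ^ 2) := by
        rw [← Finset.sum_mul]
    _ = (∑ i : I, ∑ j : I, A i j ^ 2) * (∑ j : I, ∑ k : I, B j k ^ 2) := by
        congr 1; exact Finset.sum_comm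

lemma s4nrm_list_prod_le : ∀ (L : List (Matrix I I ℝ)), L ≠ [] → s4nrm L.prod ≤ (L.map s4nrm).prod
  | [], h => absurd rfl h
  | [A], _ => by simp
  | A :: B :: L, _ => by
    simp only [List.prod_cons, List.map_cons]
    calc s4nrm (A * (B :: L).prod) ≤ s4nrm A * s4nrm ((B :: L).prod) := s4nrm_mul_le _ _
      _ ≤ s4nrm A * ((B :: L).map s4nrm).prod := by
          refine mul_le_mul_of_nonneg_left ?_ (s4nrm_nonneg A)
          exact s4nrm_list_prod_le (B :: L) (by simp)
      _ = s4nrm A * (s4nrm B * (List.map s4nrm L).prod) := by simp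

lemma s4_trace_list_prod_le (L : List (Matrix I I ℝ)) (hL : 2 ≤ L.length) :
    L.prod.trace ≤ (L.map s4nrm).prod := by
  match L with
  | A :: B :: L' =>
    simp only [List.prod_cons, List.map_cons]
    calc (A * (B * L'.prod)).trace ≤ s4nrm A * s4nrm (B * L'.prod) := s4_trace_mul_le _ _
      _ ≤ s4nrm A * (s4nrm B * (List.map s4nrm L').prod) := by
          refine mul_le_mul_of_nonneg_left ?_ (s4nrm_nonneg A)
          have := s4nrm_list_prod_le (B :: L') (by simp)
          simpa using this

lemma s4_entry (k : ℕ) (M : Fin (k+1) → Matrix I I ℝ) (a b : I) :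
    (List.ofFn M).prod a b = ∑ t : Fin k → I, ∏ n : Fin (k+1),
      M n ((Fin.snoc (Fin.cons a t) b : Fin (k+2) → I) n.castSucc)
        ((Fin.snoc (Fin.cons a t) b : Fin (k+2) → I) n.succ) := by
  induction k generalizing a with
  | zero =>
    simp only [List.ofFn_succ, List.ofFn_zero, List.prod_cons, List.prod_nil, mul_one]
    rw [Fintype.sum_unique]
    rw [Fin.prod_univ_one]
    have h0 : (Fin.castSucc (0 : Fin 1)) = Fin.castSucc 0 := rfl
    have h1 : (Fin.succ (0 : Fin 1)) = Fin.last 1 := rfl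
    rw [h1, Fin.snoc_last]
    rw [show (Fin.castSucc (0 : Fin 1)) = Fin.castSucc (0:Fin 1) from rfl, Fin.snoc_castSucc,
      Fin.cons_zero]
  | succ k ih =>
    rw [List.ofFn_succ, List.prod_cons, Matrix.mul_apply]
    rw [← (Fin.consEquiv (fun _ : Fin (k+1) => I)).sum_comp]
    rw [Fintype.sum_prod_type]
    refine Finset.sum_congr rfl fun j _ => ?_
    rw [ih (fun i => M i.succ) j, Finset.mul_sum]
    refine Finset.sum_congr rfl fun s _ => ?_
    have hv : (Fin.snoc (Fin.cons a ((Fin.consEquiv fun _ : Fin (k+1) => I) (j, s))) b : Fin (k+3) → I)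
        = Fin.cons a (Fin.snoc (Fin.cons j s) b) := by
      rw [show ((Fin.consEquiv fun _ : Fin (k+1) => I) (j, s)) = Fin.cons j s from rfl]
      rw [Fin.cons_snoc_eq_snoc_cons]
    rw [hv]
    conv_rhs => rw [Fin.prod_univ_succ]
    congr 1


lemma s4_cyc (N : ℕ) (hN : 0 < N) (M : Fin N → Matrix I I ℝ) :
    ∑ t : Fin N → I, ∏ n : Fin N, M n (t n) (t ⟨((n : ℕ) + 1) % N, Nat.mod_lt _ hN⟩)
      = (List.ofFn M).prod.trace := by
  obtain ⟨k, rfl⟩ : ∃ k, N = k + 1 := ⟨N - 1, by omega⟩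
  have key : ∀ (t : Fin (k+1) → I) (n : Fin (k+1)),
      t ⟨((n : ℕ) + 1) % (k+1), Nat.mod_lt _ hN⟩
        = (Fin.snoc t (t 0) : Fin (k+2) → I) n.succ := by
    intro t n
    rcases Nat.lt_or_ge (n : ℕ) k with hn | hn
    · have h1 : n.succ = Fin.castSucc ⟨(n : ℕ) + 1, by omega⟩ := by
        ext; simp
      rw [h1, Fin.snoc_castSucc]
      congr 1
      ext
      simp [Nat.mod_eq_of_lt (by omega : (n : ℕ) + 1 < k + 1)]
    · have hnk : (n : ℕ) = k := by omega
      have h1 : n.succ = Fin.last (k+1) := by ext; simp [hnk]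
      rw [h1, Fin.snoc_last]
      congr 1
      ext
      simp [hnk, Nat.mod_self]
  calc ∑ t : Fin (k+1) → I, ∏ n : Fin (k+1),
          M n (t n) (t ⟨((n : ℕ) + 1) % (k+1), Nat.mod_lt _ hN⟩)
      = ∑ t : Fin (k+1) → I, ∏ n : Fin (k+1),
          M n ((Fin.snoc t (t 0) : Fin (k+2) → I) n.castSucc)
            ((Fin.snoc t (t 0) : Fin (k+2) → I) n.succ) := by
        refine Finset.sum_congr rfl fun t _ => Finset.prod_congr rfl fun n _ => ?_
        rw [Fin.snoc_castSucc, ← key]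
    _ = ∑ a : I, ∑ s : Fin k → I, ∏ n : Fin (k+1),
          M n ((Fin.snoc (Fin.cons a s) a : Fin (k+2) → I) n.castSucc)
            ((Fin.snoc (Fin.cons a s) a : Fin (k+2) → I) n.succ) := by
        rw [← (Fin.consEquiv (fun _ : Fin (k+1) => I)).sum_comp, Fintype.sum_prod_type]
        refine Finset.sum_congr rfl fun a _ => Finset.sum_congr rfl fun s _ => ?_
        have h : ((Fin.consEquiv fun _ : Fin (k+1) => I) (a, s)) = Fin.cons a s := rfl
        rw [h, Fin.cons_zero]
    _ = (List.ofFn M).prod.trace := by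
        rw [Matrix.trace]
        exact Finset.sum_congr rfl fun a _ => (s4_entry k M a a).symm


end Aux

/-- cyclic Cauchy–Schwarz. For a nonempty finite set `I`,
`N ≥ 2` and nonnegative kernels `c^1,…,c^N : I × I → [0,∞)`, with the cyclic
convention `i_{N+1} := i_1`,
`∑_{(i_1,…,i_N)} ∏_n c^n(i_n, i_{n+1}) ≤ ∏_n (∑_{i,i'} c^n(i,i')²)^{1/2}`. -/
theorem statement4 {I : Type*} [Fintype I] [Nonempty I] (N : ℕ) (hN : 2 ≤ N)
    (c : Fin N → I → I → ℝ) (hc : ∀ n i i', 0 ≤ c n i i') :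
    ∑ t : Fin N → I, ∏ n : Fin N, c n (t n) (t ⟨((n : ℕ) + 1) % N, Nat.mod_lt _ (by omega)⟩) ≤
      ∏ n : Fin N, Real.sqrt (∑ i : I, ∑ i' : I, c n i i' ^ 2) := by
  classical
  set M : Fin N → Matrix I I ℝ := fun n => Matrix.of (c n) with hM
  have h1 : ∑ t : Fin N → I, ∏ n : Fin N,
      c n (t n) (t ⟨((n : ℕ) + 1) % N, Nat.mod_lt _ (by omega)⟩)
      = (List.ofFn M).prod.trace := s4_cyc N (by omega) M
  rw [h1]
  have h2 := s4_trace_list_prod_le (List.ofFn M) (by simp; omega)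
  refine h2.trans_eq ?_
  rw [List.map_ofFn, List.prod_ofFn]
  rfl
end

section
/- Let d ≥ 1, β ∈ (0,2], and let i_max ≥ 1 be an integer. Set I := { i ∈ ℕ^d : max_{1≤l≤d} i_l < i_max }, so |I| = i_max^d. Then (1/|I|) ∑_{i∈I} ∫_{ℝ^d} |ψ_i(k)|² |k|^β dk ≤ d · |I|^{β/(2d)}. -/
open Finset MeasureTheory

open Polynomial Real

/-- The `n`-th Hermite function factor
`H_n(y) = (−1)^n (2^n n! √π)^{−1/2} e^{y²} (d^n/dy^n) e^{−y²}`. -/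
noncomputable def hermiteH (n : ℕ) (y : ℝ) : ℝ :=
  (-1 : ℝ) ^ n * (Real.sqrt (2 ^ n * n.factorial * Real.sqrt Real.pi))⁻¹ *
    Real.exp (y ^ 2) * iteratedDeriv n (fun t => Real.exp (-t ^ 2)) y

open Polynomial MeasureTheory Real

noncomputable def Qp : ℕ → Polynomial ℝ
  | 0 => 1
  | n + 1 => derivative (Qp n) - C 2 * X * Qp n

lemma hasDerivAt_gauss (x : ℝ) :
    HasDerivAt (fun t : ℝ => Real.exp (-t ^ 2)) (-2 * x * Real.exp (-x ^ 2)) x := by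
  have h : HasDerivAt (fun t : ℝ => -t ^ 2) (-(2 * x)) x := by
    simpa [Pi.neg_def] using (hasDerivAt_pow 2 x).neg
  simpa [mul_comm] using h.exp

lemma hasDerivAt_poly_gauss (P : Polynomial ℝ) (x : ℝ) :
    HasDerivAt (fun t : ℝ => P.eval t * Real.exp (-t ^ 2))
      ((derivative P - C 2 * X * P).eval x * Real.exp (-x ^ 2)) x := by
  have h : HasDerivAt (fun t : ℝ => P.eval t * Real.exp (-t ^ 2)) _ x :=
    (P.hasDerivAt x).mul (hasDerivAt_gauss x)
  convert h using 1
  simp only [eval_sub, eval_mul, eval_C, eval_X]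
  ring

lemma integrable_poly_gauss (P : Polynomial ℝ) :
    Integrable (fun x : ℝ => P.eval x * Real.exp (-x ^ 2)) := by
  induction P using Polynomial.induction_on' with
  | add p q hp hq => simpa [add_mul] using hp.fun_add hq
  | monomial n a =>
    have hn : (-1 : ℝ) < n := lt_of_lt_of_le neg_one_lt_zero (Nat.cast_nonneg n)
    have h : Integrable (fun x : ℝ => x ^ (n : ℝ) * Real.exp (-1 * x ^ 2)) :=
      integrable_rpow_mul_exp_neg_mul_sq one_pos hn
    have h2 := h.const_mul a
    simp only [Real.rpow_natCast, neg_one_mul] at h2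
    simpa [eval_monomial, mul_assoc] using h2

noncomputable def Kfun (P : Polynomial ℝ) : ℝ := ∫ x : ℝ, P.eval x * Real.exp (-x ^ 2)

lemma Kfun_add (P Q : Polynomial ℝ) : Kfun (P + Q) = Kfun P + Kfun Q := by
  unfold Kfun
  simp only [eval_add, add_mul]
  exact integral_add (integrable_poly_gauss P) (integrable_poly_gauss Q)

lemma Kfun_Cmul (a : ℝ) (P : Polynomial ℝ) : Kfun (C a * P) = a * Kfun P := by
  unfold Kfun
  simp only [eval_mul, eval_C, mul_assoc]
  exact integral_const_mul a _

lemma Kfun_sub (P Q : Polynomial ℝ) : Kfun (P - Q) = Kfun P - Kfun Q := by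
  have h : P = P - Q + Q := by ring
  have := Kfun_add (P - Q) Q
  rw [← h] at this
  linarith

lemma Kfun_ibp (P : Polynomial ℝ) : Kfun (derivative P) = Kfun (C 2 * X * P) := by
  have h0 : ∫ x : ℝ, (derivative P - C 2 * X * P).eval x * Real.exp (-x ^ 2) = 0 :=
    integral_eq_zero_of_hasDerivAt_of_integrable (hasDerivAt_poly_gauss P)
      (integrable_poly_gauss _) (integrable_poly_gauss P)
  have h1 : Kfun (derivative P - C 2 * X * P) = 0 := h0
  have h2 := Kfun_sub (derivative P) (C 2 * X * P)
  linarith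

lemma Kfun_gauss : Kfun 1 = Real.sqrt π := by
  unfold Kfun
  simpa [neg_one_mul] using integral_gaussian 1

lemma derivative_Qp (n : ℕ) :
    derivative (Qp (n + 1)) = C (-(2 * (n + 1)) : ℝ) * Qp n := by
  induction n with
  | zero =>
    simp only [show Qp 1 = derivative (Qp 0) - C 2 * X * Qp 0 from rfl,
      show Qp 0 = (1 : Polynomial ℝ) from rfl, derivative_one, derivative_sub, derivative_mul,
      derivative_C, derivative_X]
    simp only [map_neg, map_mul, map_add, map_one, map_ofNat, map_zero, derivative_zero, derivative_one, Nat.cast_zero, Nat.cast_one]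
    ring
  | succ n ih =>
    have hQ : Qp (n + 1) = derivative (Qp n) - C 2 * X * Qp n := rfl
    rw [show Qp (n + 1 + 1) = derivative (Qp (n + 1)) - C 2 * X * Qp (n + 1) from rfl]
    simp only [derivative_sub, derivative_mul, derivative_C, derivative_X, ih]
    simp only [hQ]
    simp only [map_neg, map_mul, map_add, map_one, map_ofNat, Nat.cast_add, Nat.cast_one,
      Nat.cast_zero]
    ring

lemma iteratedDeriv_gauss (n : ℕ) :
    iteratedDeriv n (fun t : ℝ => Real.exp (-t ^ 2)) =
      fun y => (Qp n).eval y * Real.exp (-y ^ 2) := by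
  induction n with
  | zero =>
    funext y
    simp [Qp, iteratedDeriv_zero]
  | succ n ih =>
    funext y
    rw [iteratedDeriv_succ, ih]
    exact (hasDerivAt_poly_gauss (Qp n) y).deriv

noncomputable def Knm (n m : ℕ) : ℝ := Kfun (Qp n * Qp m)

lemma Knm_symm (n m : ℕ) : Knm n m = Knm m n := by
  unfold Knm; rw [mul_comm]

lemma Knm_succ_zero (n : ℕ) : Knm (n + 1) 0 = 0 := by
  unfold Knm
  have h : Qp (n + 1) * Qp 0 = derivative (Qp n) - C 2 * X * Qp n := by
    show Qp (n + 1) * 1 = _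
    rw [mul_one]; rfl
  rw [h, Kfun_sub, Kfun_ibp, sub_self]

lemma Knm_succ_succ (n m : ℕ) : Knm (n + 1) (m + 1) = 2 * (m + 1) * Knm n m := by
  unfold Knm
  have h1 : Qp (n + 1) * Qp (m + 1) =
      derivative (Qp n * Qp (m + 1)) - C 2 * X * (Qp n * Qp (m + 1))
        - C (-(2 * (m + 1)) : ℝ) * (Qp n * Qp m) := by
    rw [derivative_mul, derivative_Qp m]
    have hQ : Qp (n + 1) = derivative (Qp n) - C 2 * X * Qp n := rfl
    rw [hQ]; ring
  rw [h1, Kfun_sub, Kfun_sub, Kfun_ibp, Kfun_Cmul]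
  ring

lemma Knm_eq (n : ℕ) : ∀ m : ℕ,
    Knm n m = if n = m then 2 ^ n * n.factorial * Real.sqrt π else 0 := by
  induction n with
  | zero =>
    intro m
    match m with
    | 0 => simpa [Knm, Qp] using Kfun_gauss
    | m + 1 => rw [Knm_symm, Knm_succ_zero]; simp
  | succ n ih =>
    intro m
    match m with
    | 0 => rw [Knm_succ_zero]; simp
    | m + 1 =>
      rw [Knm_succ_succ, ih m]
      by_cases h : n = m
      · subst h
        simp only [if_pos rfl, Nat.factorial_succ]
        push_cast
        ring
      · simp [h, fun hc : n + 1 = m + 1 => h (Nat.succ_injective hc)]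

lemma Kfun_zero : Kfun 0 = 0 := by
  unfold Kfun; simp

lemma Kfun_sq_eq (n : ℕ) :
    Kfun (X ^ 2 * Qp n * Qp n) =
      ((n : ℝ) + 1 / 2) * (2 ^ n * n.factorial * Real.sqrt π) := by
  have key : (4 : ℝ) * Kfun (X ^ 2 * Qp n * Qp n) =
      Kfun (derivative (Qp n) * derivative (Qp n))
        - 2 * Kfun (derivative (Qp n) * Qp (n + 1)) + Knm (n + 1) (n + 1) := by
    have hid : C (4 : ℝ) * (X ^ 2 * Qp n * Qp n) =
        derivative (Qp n) * derivative (Qp n)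
          - C 2 * (derivative (Qp n) * Qp (n + 1)) + Qp (n + 1) * Qp (n + 1) := by
      rw [show Qp (n + 1) = derivative (Qp n) - C 2 * X * Qp n from rfl]
      simp only [map_ofNat]
      ring
    have h := congrArg Kfun hid
    rw [Kfun_Cmul, Kfun_add, Kfun_sub, Kfun_Cmul] at h
    unfold Knm
    linarith
  match n with
  | 0 =>
    have h0 : derivative (Qp 0) = 0 := by
      rw [show Qp 0 = (1 : Polynomial ℝ) from rfl, derivative_one]
    rw [h0] at key
    simp only [zero_mul, mul_zero, Kfun_zero] at key
    · rw [Knm_eq 1 1] at key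
      simp only [if_pos rfl] at key
      simp only [Nat.cast_zero, pow_zero, Nat.factorial_zero, Nat.cast_one]
      norm_num at key ⊢
      linarith
  | k + 1 =>
    rw [derivative_Qp k] at key
    have h1 : Kfun (C (-(2 * (k + 1)) : ℝ) * Qp k * (C (-(2 * (k + 1)) : ℝ) * Qp k)) =
        (2 * (k + 1 : ℝ)) ^ 2 * Knm k k := by
      have hid2 : C (-(2 * (k + 1)) : ℝ) * Qp k * (C (-(2 * (k + 1)) : ℝ) * Qp k) =
          C ((2 * ((k : ℝ) + 1)) ^ 2) * (Qp k * Qp k) := by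
        rw [map_pow, map_mul, map_ofNat, map_add, map_one, map_natCast, map_neg, map_mul,
          map_ofNat, map_add, map_one, map_natCast]
        ring
      rw [hid2, Kfun_Cmul]
      rfl
    have h2 : Kfun (C (-(2 * (k + 1)) : ℝ) * Qp k * Qp (k + 2)) =
        (-(2 * ((k : ℝ) + 1))) * Knm k (k + 2) := by
      have hid3 : C (-(2 * (k + 1)) : ℝ) * Qp k * Qp (k + 2) =
          C (-(2 * ((k : ℝ) + 1))) * (Qp k * Qp (k + 2)) := by
        push_cast
        ring
      rw [hid3, Kfun_Cmul]
      rfl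
    rw [h1, h2, Knm_eq k k, Knm_eq k (k + 2), Knm_eq (k + 1 + 1) (k + 1 + 1)] at key
    simp only [if_pos rfl, if_neg (by omega : ¬ k = k + 2)] at key
    have hfac : ((k + 1 + 1).factorial : ℝ) = (k + 2) * ((k + 1) * k.factorial) := by
      rw [Nat.factorial_succ, Nat.factorial_succ]
      push_cast
      ring
    have hfac1 : ((k + 1).factorial : ℝ) = (k + 1) * k.factorial := by
      rw [Nat.factorial_succ]; push_cast; ring
    rw [hfac] at key
    rw [hfac1, pow_succ (2 : ℝ) k]
    rw [pow_succ (2 : ℝ) (k + 1), pow_succ (2 : ℝ) k] at key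
    push_cast at key ⊢
    linear_combination key / 4

noncomputable def Nc (n : ℕ) : ℝ := 2 ^ n * n.factorial * Real.sqrt π

lemma Nc_pos (n : ℕ) : 0 < Nc n := by
  have h : 0 < Real.sqrt π := Real.sqrt_pos.2 Real.pi_pos
  have h2 : 0 < (n.factorial : ℝ) := by exact_mod_cast n.factorial_pos
  unfold Nc; positivity

lemma hermiteH_eq (n : ℕ) (y : ℝ) :
    hermiteH n y = (-1 : ℝ) ^ n * (Real.sqrt (Nc n))⁻¹ * (Qp n).eval y := by
  unfold hermiteH Nc
  rw [iteratedDeriv_gauss]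
  have h : Real.exp (y ^ 2) * ((Qp n).eval y * Real.exp (-y ^ 2)) = (Qp n).eval y := by
    rw [mul_comm ((Qp n).eval y), ← mul_assoc, ← Real.exp_add]
    simp
  rw [mul_assoc _ (Real.exp (y ^ 2)), h]

/-- The 1D Hermite function. -/
noncomputable def en (n : ℕ) (y : ℝ) : ℝ := hermiteH n y * Real.exp (-y ^ 2 / 2)

lemma en_sq (n : ℕ) (y : ℝ) :
    en n y ^ 2 = (Nc n)⁻¹ * ((Qp n * Qp n).eval y * Real.exp (-y ^ 2)) := by
  unfold en
  rw [hermiteH_eq]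
  have hexp : Real.exp (-y ^ 2 / 2) ^ 2 = Real.exp (-y ^ 2) := by
    rw [sq, ← Real.exp_add]
    congr 1
    ring
  have hc : ((Real.sqrt (Nc n))⁻¹ : ℝ) ^ 2 = (Nc n)⁻¹ := by
    rw [← Real.sqrt_inv, Real.sq_sqrt (inv_nonneg.2 (Nc_pos n).le)]
  have hs : (((-1 : ℝ) ^ n) : ℝ) ^ 2 = 1 := by
    rw [← pow_mul, mul_comm n 2, pow_mul]
    simp
  rw [eval_mul, mul_pow, mul_pow, mul_pow, hexp, hc, hs]
  ring

lemma continuous_en (n : ℕ) : Continuous (en n) := by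
  have h : en n = fun y => (-1 : ℝ) ^ n * (Real.sqrt (Nc n))⁻¹ * (Qp n).eval y *
      Real.exp (-y ^ 2 / 2) := by
    funext y; rw [en, hermiteH_eq]
  rw [h]
  fun_prop

lemma integrable_en_sq (n : ℕ) : Integrable (fun y => en n y ^ 2) := by
  simp only [en_sq]
  exact (integrable_poly_gauss (Qp n * Qp n)).const_mul _

lemma integrable_sq_en_sq (n : ℕ) : Integrable (fun y => en n y ^ 2 * y ^ 2) := by
  have h : (fun y => en n y ^ 2 * y ^ 2) =
      fun y => (Nc n)⁻¹ * ((X ^ 2 * Qp n * Qp n).eval y * Real.exp (-y ^ 2)) := by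
    funext y
    rw [en_sq]
    simp only [eval_mul, eval_pow, eval_X]
    ring
  rw [h]
  exact (integrable_poly_gauss (X ^ 2 * Qp n * Qp n)).const_mul _

lemma integral_en_sq (n : ℕ) : ∫ y : ℝ, en n y ^ 2 = 1 := by
  simp only [en_sq]
  rw [integral_const_mul]
  have h : ∫ y : ℝ, (Qp n * Qp n).eval y * Real.exp (-y ^ 2) = Nc n := by
    have := Knm_eq n n
    simp only [if_pos rfl] at this
    exact this
  rw [h, inv_mul_cancel₀ (Nc_pos n).ne']

lemma integral_sq_en_sq (n : ℕ) : ∫ y : ℝ, en n y ^ 2 * y ^ 2 = (n : ℝ) + 1 / 2 := by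
  have h : (fun y : ℝ => en n y ^ 2 * y ^ 2) =
      fun y => (Nc n)⁻¹ * ((X ^ 2 * Qp n * Qp n).eval y * Real.exp (-y ^ 2)) := by
    funext y
    rw [en_sq]
    simp only [eval_mul, eval_pow, eval_X]
    ring
  rw [h, integral_const_mul]
  have h2 : ∫ y : ℝ, (X ^ 2 * Qp n * Qp n).eval y * Real.exp (-y ^ 2) =
      ((n : ℝ) + 1 / 2) * Nc n := Kfun_sq_eq n
  rw [h2]
  field_simp [(Nc_pos n).ne']

/-- The multivariate Hermite function `ψ_i(x) = e^{−|x|²/2} ∏_l H_{i_l}(x_l)`. -/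
noncomputable def hermitePsi {d : ℕ} (i : Fin d → ℕ) (x : EuclideanSpace ℝ (Fin d)) : ℝ :=
  Real.exp (-‖x‖ ^ 2 / 2) * ∏ l, hermiteH (i l) (x l)

section Multivariate

variable {d : ℕ}

lemma euclid_norm_sq (x : EuclideanSpace ℝ (Fin d)) : ‖x‖ ^ 2 = ∑ l, x l ^ 2 := by
  rw [EuclideanSpace.norm_eq, Real.sq_sqrt (by positivity)]
  simp [sq_abs]

lemma hermitePsi_eq_prod (i : Fin d → ℕ) (x : EuclideanSpace ℝ (Fin d)) :
    hermitePsi i x = ∏ l, en (i l) (x l) := by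
  unfold hermitePsi
  simp only [en]
  have he : Real.exp (-‖x‖ ^ 2 / 2) = ∏ l, Real.exp (-x l ^ 2 / 2) := by
    rw [← Real.exp_sum]
    congr 1
    rw [euclid_norm_sq]
    rw [← Finset.sum_div, ← Finset.sum_neg_distrib]
  rw [Finset.prod_mul_distrib, he]
  ring

lemma integral_euclidean (F : EuclideanSpace ℝ (Fin d) → ℝ) :
    ∫ k : EuclideanSpace ℝ (Fin d), F k
      = ∫ x : Fin d → ℝ, F ((MeasurableEquiv.toLp 2 (Fin d → ℝ)).symm.symm x) :=
  ((MeasurePreserving.symm (MeasurableEquiv.toLp 2 (Fin d → ℝ)).symm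
    (EuclideanSpace.volume_preserving_symm_measurableEquiv_toLp (Fin d))).integral_comp' F).symm

lemma integrable_euclidean {F : EuclideanSpace ℝ (Fin d) → ℝ}
    (h : Integrable (fun x : Fin d → ℝ =>
      F ((MeasurableEquiv.toLp 2 (Fin d → ℝ)).symm.symm x))) :
    Integrable F :=
  ((MeasurePreserving.symm (MeasurableEquiv.toLp 2 (Fin d → ℝ)).symm
    (EuclideanSpace.volume_preserving_symm_measurableEquiv_toLp (Fin d))).integrable_comp_emb
    (MeasurableEquiv.toLp 2 (Fin d → ℝ)).symm.symm.measurableEmbedding).mp h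

lemma euclid_symm_apply (x : Fin d → ℝ) (l : Fin d) :
    (MeasurableEquiv.toLp 2 (Fin d → ℝ)).symm.symm x l = x l := rfl

lemma integral_psi_sq (i : Fin d → ℕ) :
    ∫ k : EuclideanSpace ℝ (Fin d), hermitePsi i k ^ 2 = 1 := by
  have hfun : ∀ k : EuclideanSpace ℝ (Fin d), hermitePsi i k ^ 2 = ∏ l, en (i l) (k l) ^ 2 := by
    intro k
    rw [hermitePsi_eq_prod, ← Finset.prod_pow]
  simp only [hfun]
  rw [integral_euclidean]
  simp only [euclid_symm_apply]
  rw [MeasureTheory.integral_fintype_prod_volume_eq_prod (fun l y => en (i l) y ^ 2)]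
  simp [integral_en_sq]

lemma integrable_psi_sq (i : Fin d → ℕ) :
    Integrable (fun k : EuclideanSpace ℝ (Fin d) => hermitePsi i k ^ 2) := by
  apply integrable_euclidean
  have h : Integrable (fun x : Fin d → ℝ => ∏ l, en (i l) (x l) ^ 2) :=
    Integrable.fintype_prod (f := fun l y => en (i l) y ^ 2) (fun l => integrable_en_sq (i l))
  apply h.congr
  filter_upwards with x
  rw [hermitePsi_eq_prod, ← Finset.prod_pow]
  rfl

/-- weight functions for the second moment -/
noncomputable def Wf (i : Fin d → ℕ) (l j : Fin d) (y : ℝ) : ℝ :=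
  en (i j) y ^ 2 * (if j = l then y ^ 2 else 1)

lemma integrable_Wf (i : Fin d → ℕ) (l j : Fin d) : Integrable (Wf i l j) := by
  unfold Wf
  by_cases h : j = l
  · simp only [h, if_true, eq_self_iff_true]
    exact integrable_sq_en_sq (i l)
  · simp only [if_neg h, mul_one]
    exact integrable_en_sq (i j)

lemma integral_Wf (i : Fin d → ℕ) (l j : Fin d) :
    ∫ y : ℝ, Wf i l j y = if j = l then (i j : ℝ) + 1 / 2 else 1 := by
  unfold Wf
  by_cases h : j = l
  · simp only [h, if_true, eq_self_iff_true]
    exact integral_sq_en_sq (i l)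
  · simp only [if_neg h, mul_one]
    exact integral_en_sq (i j)

lemma psi_sq_norm_eq (i : Fin d → ℕ) (k : EuclideanSpace ℝ (Fin d)) :
    hermitePsi i k ^ 2 * ‖k‖ ^ 2 = ∑ l, ∏ j, Wf i l j (k j) := by
  rw [hermitePsi_eq_prod, ← Finset.prod_pow, euclid_norm_sq, Finset.mul_sum]
  refine Finset.sum_congr rfl fun l _ => ?_
  unfold Wf
  rw [Finset.prod_mul_distrib, Finset.prod_ite_eq' Finset.univ l (fun j => k j ^ 2)]
  simp

lemma integral_psi_sq_norm (i : Fin d → ℕ) :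
    ∫ k : EuclideanSpace ℝ (Fin d), hermitePsi i k ^ 2 * ‖k‖ ^ 2
      = ∑ l, ((i l : ℝ) + 1 / 2) := by
  simp only [psi_sq_norm_eq]
  rw [integral_euclidean]
  simp only [euclid_symm_apply]
  rw [integral_finset_sum _ (fun l _ =>
    (Integrable.fintype_prod (f := fun j => Wf i l j) (fun j => integrable_Wf i l j) :
      Integrable (fun x : Fin d → ℝ => ∏ j, Wf i l j (x j))))]
  refine Finset.sum_congr rfl fun l _ => ?_
  rw [MeasureTheory.integral_fintype_prod_volume_eq_prod (fun j => Wf i l j)]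
  simp only [integral_Wf]
  rw [Finset.prod_ite_eq' Finset.univ l (fun j => (i j : ℝ) + 1 / 2)]
  simp

lemma integrable_psi_sq_norm (i : Fin d → ℕ) :
    Integrable (fun k : EuclideanSpace ℝ (Fin d) => hermitePsi i k ^ 2 * ‖k‖ ^ 2) := by
  apply integrable_euclidean
  have h : Integrable (fun x : Fin d → ℝ => ∑ l, ∏ j, Wf i l j (x j)) :=
    integrable_finset_sum _ (fun l _ =>
      Integrable.fintype_prod (f := fun j => Wf i l j) (fun j => integrable_Wf i l j))
  apply h.congr
  filter_upwards with x
  rw [psi_sq_norm_eq]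
  simp only [euclid_symm_apply]

lemma continuous_psi (i : Fin d → ℕ) : Continuous (hermitePsi i) := by
  have h : hermitePsi i = fun x : EuclideanSpace ℝ (Fin d) => ∏ l, en (i l) (x l) := by
    funext x; exact hermitePsi_eq_prod i x
  rw [h]
  refine continuous_finset_prod _ fun l _ => (continuous_en (i l)).comp ?_
  exact (continuous_apply l).comp (PiLp.continuous_ofLp (p := 2) (β := fun _ : Fin d => ℝ))

end Multivariate

section Holder

lemma holder_key {α : Type*} [TopologicalSpace α] [MeasurableSpace α] [OpensMeasurableSpace α]
    {μ : Measure α} {P S : α → ℝ}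
    (hPc : Continuous P) (hSc : Continuous S) (hP : ∀ x, 0 ≤ P x) (hS : ∀ x, 0 ≤ S x)
    {β : ℝ} (hβ0 : 0 < β) (hβ2 : β < 2)
    (hPint : Integrable P μ) (hPSint : Integrable (fun x => P x * S x) μ)
    (hP1 : ∫ x, P x ∂μ = 1) :
    ∫ x, P x * S x ^ (β / 2) ∂μ ≤ (∫ x, P x * S x ∂μ) ^ (β / 2) := by
  set I := ∫ x, P x * S x ∂μ with hI
  have hI0 : 0 ≤ I := integral_nonneg fun x => mul_nonneg (hP x) (hS x)
  have hcont : Continuous fun x => P x * S x ^ (β / 2) :=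
    hPc.mul (hSc.rpow_const fun x => Or.inr (by positivity))
  have hnn : ∀ x, 0 ≤ P x * S x ^ (β / 2) :=
    fun x => mul_nonneg (hP x) (Real.rpow_nonneg (hS x) _)
  have heq : ∫ x, P x * S x ^ (β / 2) ∂μ
      = (∫⁻ x, ENNReal.ofReal (P x * S x ^ (β / 2)) ∂μ).toReal :=
    integral_eq_lintegral_of_nonneg_ae (Filter.Eventually.of_forall hnn)
      hcont.aestronglyMeasurable
  set p : ℝ := 2 / β with hp
  set q : ℝ := 2 / (2 - β) with hq
  have h1p : 1 / p = β / 2 := by rw [hp, one_div_div]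
  have h1q : 1 / q = (2 - β) / 2 := by rw [hq, one_div_div]
  have hpq : p.HolderConjugate q := by
    rw [Real.holderConjugate_iff]
    constructor
    · rw [hp, lt_div_iff₀ hβ0]; linarith
    · rw [hp, hq, inv_div, inv_div]; ring
  set a : α → ENNReal := fun x => ENNReal.ofReal (P x * S x) with ha
  set b : α → ENNReal := fun x => ENNReal.ofReal (P x) with hb
  have hsplit : ∀ x, ENNReal.ofReal (P x * S x ^ (β / 2)) = a x ^ (1 / p) * b x ^ (1 / q) := by
    intro x
    rw [h1p, h1q, ha, hb]
    simp only
    rw [ENNReal.ofReal_rpow_of_nonneg (mul_nonneg (hP x) (hS x)) (by positivity),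
      ENNReal.ofReal_rpow_of_nonneg (hP x) (by linarith),
      ← ENNReal.ofReal_mul (Real.rpow_nonneg (mul_nonneg (hP x) (hS x)) _)]
    congr 1
    rw [Real.mul_rpow (hP x) (hS x)]
    have hPa : P x ^ (β / 2) * P x ^ ((2 - β) / 2) = P x := by
      rw [← Real.rpow_add_of_nonneg (hP x) (by positivity) (by linarith)]
      have hsum2 : β / 2 + (2 - β) / 2 = 1 := by ring
      rw [hsum2, Real.rpow_one]
    calc P x * S x ^ (β / 2)
        = P x ^ (β / 2) * P x ^ ((2 - β) / 2) * S x ^ (β / 2) := by rw [hPa]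
      _ = P x ^ (β / 2) * S x ^ (β / 2) * P x ^ ((2 - β) / 2) := by ring
  have ham : AEMeasurable (fun x => a x ^ (1 / p)) μ :=
    ((ENNReal.continuous_rpow_const.comp
      (ENNReal.continuous_ofReal.comp (hPc.mul hSc))).measurable).aemeasurable
  have hbm : AEMeasurable (fun x => b x ^ (1 / q)) μ :=
    ((ENNReal.continuous_rpow_const.comp
      (ENNReal.continuous_ofReal.comp hPc)).measurable).aemeasurable
  have hholder := ENNReal.lintegral_mul_le_Lp_mul_Lq μ hpq ham hbm
  have hap : ∀ x : α, (a x ^ (1 / p)) ^ p = a x := by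
    intro x
    rw [← ENNReal.rpow_mul, one_div, inv_mul_cancel₀ hpq.pos.ne', ENNReal.rpow_one]
  have hbq : ∀ x : α, (b x ^ (1 / q)) ^ q = b x := by
    intro x
    rw [← ENNReal.rpow_mul, one_div, inv_mul_cancel₀ hpq.symm.pos.ne', ENNReal.rpow_one]
  have key : ∫⁻ x, ENNReal.ofReal (P x * S x ^ (β / 2)) ∂μ
      ≤ (∫⁻ x, a x ∂μ) ^ (1 / p) * (∫⁻ x, b x ∂μ) ^ (1 / q) := by
    calc ∫⁻ x, ENNReal.ofReal (P x * S x ^ (β / 2)) ∂μ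
        = ∫⁻ x, ((fun x => a x ^ (1 / p)) * fun x => b x ^ (1 / q)) x ∂μ := by
          simp only [Pi.mul_apply, hsplit]
      _ ≤ (∫⁻ x, (a x ^ (1 / p)) ^ p ∂μ) ^ (1 / p) * (∫⁻ x, (b x ^ (1 / q)) ^ q ∂μ) ^ (1 / q) :=
          hholder
      _ = (∫⁻ x, a x ∂μ) ^ (1 / p) * (∫⁻ x, b x ∂μ) ^ (1 / q) := by
          simp only [hap, hbq]
  have hA : ∫⁻ x, a x ∂μ = ENNReal.ofReal I :=
    (MeasureTheory.ofReal_integral_eq_lintegral_ofReal hPSint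
      (Filter.Eventually.of_forall fun x => mul_nonneg (hP x) (hS x))).symm
  have hB : ∫⁻ x, b x ∂μ = 1 := by
    rw [hb, ← MeasureTheory.ofReal_integral_eq_lintegral_ofReal hPint
      (Filter.Eventually.of_forall hP), hP1, ENNReal.ofReal_one]
  rw [hA, hB, ENNReal.one_rpow, mul_one, h1p] at key
  have hfin : (ENNReal.ofReal I) ^ (β / 2) ≠ ⊤ :=
    ENNReal.rpow_ne_top_of_nonneg (by positivity) ENNReal.ofReal_ne_top
  rw [heq]
  calc (∫⁻ x, ENNReal.ofReal (P x * S x ^ (β / 2)) ∂μ).toReal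
      ≤ ((ENNReal.ofReal I) ^ (β / 2)).toReal := ENNReal.toReal_mono hfin key
    _ = I ^ (β / 2) := by rw [← ENNReal.toReal_rpow, ENNReal.toReal_ofReal hI0]

end Holder

lemma psi_beta_bound {d : ℕ} (i : Fin d → ℕ) {β : ℝ} (hβ0 : 0 < β) (hβ2 : β ≤ 2) :
    ∫ k : EuclideanSpace ℝ (Fin d), hermitePsi i k ^ 2 * ‖k‖ ^ β
      ≤ (∑ l, ((i l : ℝ) + 1 / 2)) ^ (β / 2) := by
  have hrw : ∀ k : EuclideanSpace ℝ (Fin d), ‖k‖ ^ β = ((‖k‖ ^ 2 : ℝ)) ^ (β / 2) := by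
    intro k
    rw [← Real.rpow_natCast ‖k‖ 2, ← Real.rpow_mul (norm_nonneg k)]
    congr 1
    push_cast
    ring
  rcases eq_or_lt_of_le hβ2 with h2 | h2
  · subst h2
    have h1 : ∀ k : EuclideanSpace ℝ (Fin d), ‖k‖ ^ (2 : ℝ) = ‖k‖ ^ (2 : ℕ) := fun k =>
      Real.rpow_two ‖k‖
    simp only [h1]
    rw [integral_psi_sq_norm i]
    have : (2 : ℝ) / 2 = 1 := by norm_num
    rw [this, Real.rpow_one]
  · have hhk := holder_key (μ := (volume : Measure (EuclideanSpace ℝ (Fin d))))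
      (P := fun k => hermitePsi i k ^ 2) (S := fun k => ‖k‖ ^ 2)
      ((continuous_psi i).pow 2) (continuous_norm.pow 2)
      (fun x => sq_nonneg _) (fun x => sq_nonneg _) hβ0 h2
      (integrable_psi_sq i) (integrable_psi_sq_norm i) (integral_psi_sq i)
    rw [integral_psi_sq_norm i] at hhk
    calc ∫ k : EuclideanSpace ℝ (Fin d), hermitePsi i k ^ 2 * ‖k‖ ^ β
        = ∫ k : EuclideanSpace ℝ (Fin d), hermitePsi i k ^ 2 * ((‖k‖ ^ 2 : ℝ)) ^ (β / 2) := by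
          simp only [hrw]
      _ ≤ _ := hhk

/-- For `β ∈ (0,2]` and `I = {i ∈ ℕ^d : max_l i_l < i_max}`
(so `|I| = i_max^d`), the average homogeneous Sobolev-type norm of the Hermite
functions satisfies
`(1/|I|) ∑_{i∈I} ∫ |ψ_i(k)|² |k|^β dk ≤ d · |I|^{β/(2d)}`. -/
theorem statement5 (d : ℕ) (hd : 1 ≤ d) (β : ℝ) (hβ0 : 0 < β) (hβ2 : β ≤ 2)
    (imax : ℕ) (himax : 1 ≤ imax) :
    (1 / ((imax : ℝ) ^ d)) * ∑ i : Fin d → Fin imax,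
        ∫ k : EuclideanSpace ℝ (Fin d), hermitePsi (fun l => (i l : ℕ)) k ^ 2 * ‖k‖ ^ β
      ≤ (d : ℝ) * ((imax : ℝ) ^ d) ^ (β / (2 * (d : ℝ))) := by
  have hd' : (1 : ℝ) ≤ d := by exact_mod_cast hd
  have him' : (1 : ℝ) ≤ imax := by exact_mod_cast himax
  have hcard : (Fintype.card (Fin d → Fin imax) : ℝ) = (imax : ℝ) ^ d := by
    rw [Fintype.card_fun]
    push_cast
    simp
  -- bound for each i
  have hbound : ∀ i : Fin d → Fin imax,
      ∫ k : EuclideanSpace ℝ (Fin d), hermitePsi (fun l => (i l : ℕ)) k ^ 2 * ‖k‖ ^ β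
        ≤ (d : ℝ) * (imax : ℝ) ^ (β / 2) := by
    intro i
    have h1 := psi_beta_bound (fun l => (i l : ℕ)) hβ0 hβ2
    have hsum : ∑ l : Fin d, (((i l : ℕ) : ℝ) + 1 / 2) ≤ (d : ℝ) * imax := by
      calc ∑ l : Fin d, (((i l : ℕ) : ℝ) + 1 / 2) ≤ ∑ _l : Fin d, (imax : ℝ) := by
            apply Finset.sum_le_sum
            intro l _
            have hl : ((i l : ℕ) : ℝ) + 1 ≤ imax := by
              exact_mod_cast Nat.succ_le_of_lt (i l).isLt
            linarith
        _ = (d : ℝ) * imax := by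
            rw [Finset.sum_const, Finset.card_univ, Fintype.card_fin, nsmul_eq_mul]
    have hsum0 : (0 : ℝ) ≤ ∑ l : Fin d, (((i l : ℕ) : ℝ) + 1 / 2) := by positivity
    have h2 : (∑ l : Fin d, (((i l : ℕ) : ℝ) + 1 / 2)) ^ (β / 2)
        ≤ ((d : ℝ) * imax) ^ (β / 2) :=
      Real.rpow_le_rpow hsum0 hsum (by positivity)
    have h3 : ((d : ℝ) * imax) ^ (β / 2) = (d : ℝ) ^ (β / 2) * (imax : ℝ) ^ (β / 2) :=
      Real.mul_rpow (by positivity) (by positivity)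
    have h4 : (d : ℝ) ^ (β / 2) ≤ (d : ℝ) := by
      calc (d : ℝ) ^ (β / 2) ≤ (d : ℝ) ^ (1 : ℝ) :=
            Real.rpow_le_rpow_of_exponent_le hd' (by linarith)
        _ = (d : ℝ) := Real.rpow_one _
    calc ∫ k : EuclideanSpace ℝ (Fin d), hermitePsi (fun l => (i l : ℕ)) k ^ 2 * ‖k‖ ^ β
        ≤ (∑ l : Fin d, (((i l : ℕ) : ℝ) + 1 / 2)) ^ (β / 2) := h1
      _ ≤ ((d : ℝ) * imax) ^ (β / 2) := h2
      _ = (d : ℝ) ^ (β / 2) * (imax : ℝ) ^ (β / 2) := h3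
      _ ≤ (d : ℝ) * (imax : ℝ) ^ (β / 2) := by
          apply mul_le_mul_of_nonneg_right h4 (Real.rpow_nonneg (by positivity) _)
  -- sum up
  have hsum : ∑ i : Fin d → Fin imax,
      ∫ k : EuclideanSpace ℝ (Fin d), hermitePsi (fun l => (i l : ℕ)) k ^ 2 * ‖k‖ ^ β
        ≤ (imax : ℝ) ^ d * ((d : ℝ) * (imax : ℝ) ^ (β / 2)) := by
    calc ∑ i : Fin d → Fin imax,
        ∫ k : EuclideanSpace ℝ (Fin d), hermitePsi (fun l => (i l : ℕ)) k ^ 2 * ‖k‖ ^ β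
        ≤ ∑ _i : Fin d → Fin imax, (d : ℝ) * (imax : ℝ) ^ (β / 2) :=
          Finset.sum_le_sum fun i _ => hbound i
      _ = (imax : ℝ) ^ d * ((d : ℝ) * (imax : ℝ) ^ (β / 2)) := by
          rw [Finset.sum_const, Finset.card_univ, nsmul_eq_mul, hcard]
  have hrhs : ((imax : ℝ) ^ d) ^ (β / (2 * (d : ℝ))) = (imax : ℝ) ^ (β / 2) := by
    rw [← Real.rpow_natCast (imax : ℝ) d, ← Real.rpow_mul (by positivity)]
    congr 1
    have hd0 : (d : ℝ) ≠ 0 := by positivity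
    field_simp
  rw [hrhs]
  have hpow : (0 : ℝ) < (imax : ℝ) ^ d := by positivity
  calc (1 / ((imax : ℝ) ^ d)) * ∑ i : Fin d → Fin imax,
        ∫ k : EuclideanSpace ℝ (Fin d), hermitePsi (fun l => (i l : ℕ)) k ^ 2 * ‖k‖ ^ β
      ≤ (1 / ((imax : ℝ) ^ d)) * ((imax : ℝ) ^ d * ((d : ℝ) * (imax : ℝ) ^ (β / 2))) := by
        apply mul_le_mul_of_nonneg_left hsum (by positivity)
    _ = (d : ℝ) * (imax : ℝ) ^ (β / 2) := by
        field_simp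
end
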